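/- For every continuous compactly supported function f : ℝ² → ℂ and every x ∈ ℝ², one has lim_{t→0⁺} ∫_{ℝ²} K(t,x,y) f(y) dy = f(x); that is, the Mehler kernel is an approximate identity as t → 0⁺. -/

import Mathlib

/-! The modulus of the Mehler kernel is, up to the factor `(cosh (B₀ t))⁻¹ → 1`, the Gaussian
density of width `c(t) = √(4 tanh (B₀ t) / B₀) → 0` centred at `x`, while its phase
`exp (-i (B₀/2) (x₁ y₂ - x₂ y₁))` is continuous, of modulus one, and equal to `1` at `y = x`.
Absorbing the phase into `f`, the theorem reduces to the fact that the dilates of an integrable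
density of total mass one form an approximate identity; after the substitution `y = x + c w`
this is dominated convergence. -/

open MeasureTheory Real Set Filter Topology

/-- The Mehler kernel `K(t,x,y)` of the Landau Hamiltonian with constant magnetic field `B₀`. -/
noncomputable def mehlerK (B₀ t : ℝ) (x y : ℝ × ℝ) : ℂ :=
  ((B₀ / (4 * Real.pi * Real.sinh (B₀ * t)) : ℝ) : ℂ) *
    Complex.exp
      (-(((B₀ * ((x.1 - y.1) ^ 2 + (x.2 - y.2) ^ 2) / (4 * Real.tanh (B₀ * t))) : ℝ) : ℂ)
        - Complex.I * ((B₀ / 2 : ℝ) : ℂ) * (((x.1 * y.2 - x.2 * y.1) : ℝ) : ℂ))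

open Module

section ApproximateIdentity

variable {V E : Type*} [NormedAddCommGroup V] [NormedSpace ℝ V] [MeasurableSpace V] [BorelSpace V]
  [NormedAddCommGroup E] [NormedSpace ℝ E] (μ : Measure V)

theorem tendsto_integral_smul_comp_add_smul [SecondCountableTopology V] [CompleteSpace E]
    {φ : V → ℝ} (hφ : Integrable φ μ) (hφ_one : ∫ w, φ w ∂μ = 1) {g : V → E} (hg : Continuous g)
    {M : ℝ} (hM : ∀ y, ‖g y‖ ≤ M) (x : V) :
    Tendsto (fun c : ℝ => ∫ w, φ w • g (x + c • w) ∂μ) (𝓝 0) (𝓝 (g x)) := by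
  have hlim : ∫ w, φ w • g (x + (0 : ℝ) • w) ∂μ = g x := by
    simp [integral_smul_const, hφ_one]
  rw [← hlim]
  refine tendsto_integral_filter_of_dominated_convergence (fun w => |φ w| * M)
    (Eventually.of_forall fun c => hφ.aestronglyMeasurable.smul ?_)
    (Eventually.of_forall fun c => Eventually.of_forall fun w => ?_) (hφ.abs.mul_const M)
    (Eventually.of_forall fun w => ?_)
  · exact (show Continuous fun w => g (x + c • w) by fun_prop).aestronglyMeasurable
  · rw [norm_smul, Real.norm_eq_abs]
    exact mul_le_mul_of_nonneg_left (hM _) (abs_nonneg _)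
  · exact ((show Continuous fun c : ℝ => g (x + c • w) by fun_prop).tendsto 0).const_smul _

variable [FiniteDimensional ℝ V] [μ.IsAddHaarMeasure]

theorem integral_smul_comp_add_smul {c : ℝ} (hc : c ≠ 0) (φ : V → ℝ) (g : V → E) (x : V) :
    ∫ w, φ w • g (x + c • w) ∂μ
      = ∫ y, ((|c| ^ finrank ℝ V)⁻¹ * φ (c⁻¹ • (y - x))) • g y ∂μ := by
  have hscale := Measure.integral_comp_smul μ (fun z => φ (c⁻¹ • z) • g (x + z)) c
  simp only [smul_smul, inv_mul_cancel₀ hc, one_smul] at hscale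
  rw [hscale, ← integral_sub_right_eq_self _ x]
  simp [abs_inv, abs_pow, mul_smul, integral_smul]

theorem tendsto_integral_dilation_smul [CompleteSpace E] {φ : V → ℝ} (hφ : Integrable φ μ)
    (hφ_one : ∫ w, φ w ∂μ = 1) {g : V → E} (hg : Continuous g) {M : ℝ} (hM : ∀ y, ‖g y‖ ≤ M)
    (x : V) :
    Tendsto (fun c : ℝ => ∫ y, ((|c| ^ finrank ℝ V)⁻¹ * φ (c⁻¹ • (y - x))) • g y ∂μ)
      (𝓝[≠] 0) (𝓝 (g x)) :=
  ((tendsto_integral_smul_comp_add_smul μ hφ hφ_one hg hM x).mono_left nhdsWithin_le_nhds).congr'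
    (eventually_mem_nhdsWithin.mono fun _ hc => integral_smul_comp_add_smul μ hc φ g x)

end ApproximateIdentity

theorem Real.tanh_pos {u : ℝ} (hu : 0 < u) : 0 < tanh u := by
  rw [tanh_eq_sinh_div_cosh]; exact div_pos (sinh_pos_iff.2 hu) (cosh_pos u)

@[fun_prop]
theorem Real.continuous_tanh : Continuous tanh := by
  rw [show tanh = fun u => sinh u / cosh u from funext tanh_eq_sinh_div_cosh]
  exact continuous_sinh.div continuous_cosh fun u => (cosh_pos u).ne'

-- In coordinates, since the norm on `ℝ × ℝ` is the sup norm.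
noncomputable def gaussianDensity (w : ℝ × ℝ) : ℝ := π⁻¹ * exp (-(w.1 ^ 2 + w.2 ^ 2))

theorem integrable_gaussianDensity : Integrable gaussianDensity := by
  have h := (integrable_exp_neg_mul_sq one_pos).mul_prod (integrable_exp_neg_mul_sq one_pos)
  rw [← Measure.volume_eq_prod] at h
  refine (h.const_mul π⁻¹).congr (Eventually.of_forall fun w => ?_)
  simp only [gaussianDensity, ← Real.exp_add]
  ring_nf

theorem integral_gaussianDensity : ∫ w, gaussianDensity w = 1 := by
  have h : ∀ w : ℝ × ℝ, gaussianDensity w = π⁻¹ * (exp (-1 * w.1 ^ 2) * exp (-1 * w.2 ^ 2)) := by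
    intro w; rw [gaussianDensity, ← Real.exp_add]; ring_nf
  simp_rw [h]
  rw [integral_const_mul, Measure.volume_eq_prod,
    integral_prod_mul (fun u : ℝ => exp (-1 * u ^ 2)) (fun u : ℝ => exp (-1 * u ^ 2)),
    integral_gaussian, div_one, mul_self_sqrt pi_pos.le, inv_mul_cancel₀ pi_pos.ne']

noncomputable def mehlerWidth (B₀ t : ℝ) : ℝ := √(4 * tanh (B₀ * t) / B₀)

theorem mehlerWidth_pos {B₀ t : ℝ} (hB : 0 < B₀) (ht : 0 < t) : 0 < mehlerWidth B₀ t :=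
  sqrt_pos.2 (div_pos (mul_pos four_pos (tanh_pos (mul_pos hB ht))) hB)

theorem tendsto_mehlerWidth {B₀ : ℝ} (hB : 0 < B₀) :
    Tendsto (mehlerWidth B₀) (𝓝[>] 0) (𝓝[≠] 0) := by
  refine tendsto_nhdsWithin_iff.2 ⟨?_, eventually_mem_nhdsWithin.mono fun t ht =>
    (mehlerWidth_pos hB ht).ne'⟩
  have hcont : Continuous (mehlerWidth B₀) := by
    unfold mehlerWidth; fun_prop
  exact (hcont.tendsto' 0 0 (by simp [mehlerWidth])).mono_left nhdsWithin_le_nhds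

noncomputable def magneticPhase (B₀ : ℝ) (x y : ℝ × ℝ) : ℂ :=
  Complex.exp (-(Complex.I * ((B₀ / 2 : ℝ) : ℂ) * (((x.1 * y.2 - x.2 * y.1) : ℝ) : ℂ)))

theorem magneticPhase_self (B₀ : ℝ) (x : ℝ × ℝ) : magneticPhase B₀ x x = 1 := by
  simp [magneticPhase, mul_comm]

theorem norm_magneticPhase (B₀ : ℝ) (x y : ℝ × ℝ) : ‖magneticPhase B₀ x y‖ = 1 := by
  simp [magneticPhase, Complex.norm_exp]

theorem continuous_magneticPhase (B₀ : ℝ) (x : ℝ × ℝ) : Continuous (magneticPhase B₀ x) := by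
  unfold magneticPhase; fun_prop

theorem mehlerK_eq {B₀ t : ℝ} (hB : 0 < B₀) (ht : 0 < t) (x y : ℝ × ℝ) :
    mehlerK B₀ t x y = (cosh (B₀ * t))⁻¹ • ((|mehlerWidth B₀ t| ^ 2)⁻¹ *
      gaussianDensity ((mehlerWidth B₀ t)⁻¹ • (y - x))) • magneticPhase B₀ x y := by
  set c := mehlerWidth B₀ t
  have hc : 0 < c := mehlerWidth_pos hB ht
  have hτ := Real.tanh_pos (mul_pos hB ht)
  have hc2 : c ^ 2 = 4 * tanh (B₀ * t) / B₀ := sq_sqrt (by positivity)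
  have hexp : -(c⁻¹ * (y.1 - x.1)) ^ 2 + -(c⁻¹ * (y.2 - x.2)) ^ 2
      = -(B₀ * ((x.1 - y.1) ^ 2 + (x.2 - y.2) ^ 2) / (4 * tanh (B₀ * t))) := by
    rw [mul_pow, mul_pow, inv_pow, hc2]; field_simp; ring
  have hpre : (cosh (B₀ * t))⁻¹ * ((c ^ 2)⁻¹ * π⁻¹) = B₀ / (4 * π * sinh (B₀ * t)) := by
    rw [hc2, tanh_eq_sinh_div_cosh]; field_simp
  rw [mehlerK, magneticPhase, sub_eq_add_neg, Complex.exp_add, abs_of_pos hc, smul_smul,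
    ← mul_assoc, ← hpre]
  simp only [gaussianDensity, Prod.smul_fst, Prod.smul_snd, Prod.fst_sub, Prod.snd_sub,
    smul_eq_mul]
  rw [neg_add, hexp, Complex.real_smul]
  push_cast
  ring

/-- **The Mehler kernel is an approximate identity as `t → 0⁺`.** For every continuous compactly
supported `f : ℝ² → ℂ` and every `x ∈ ℝ²`, `lim_{t→0⁺} ∫_{ℝ²} K(t,x,y) f(y) dy = f(x)`. -/
theorem mehlerK_approximate_identity (B₀ : ℝ) (hB : 0 < B₀) (f : ℝ × ℝ → ℂ)
    (hf : Continuous f) (hsupp : HasCompactSupport f) (x : ℝ × ℝ) :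
    Tendsto (fun t : ℝ => ∫ y : ℝ × ℝ, mehlerK B₀ t x y * f y)
      (𝓝[>] (0 : ℝ)) (𝓝 (f x)) := by
  obtain ⟨M, hM⟩ := hsupp.exists_bound_of_continuous hf
  set g : ℝ × ℝ → ℂ := fun y => magneticPhase B₀ x y * f y
  have hg : Continuous g := (continuous_magneticPhase B₀ x).mul hf
  have hgM (y : ℝ × ℝ) : ‖g y‖ ≤ M := by simpa [g, norm_magneticPhase] using hM y
  have hcosh : Tendsto (fun t => (cosh (B₀ * t))⁻¹) (𝓝[>] 0) (𝓝 1) := by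
    have : Continuous fun t => (cosh (B₀ * t))⁻¹ :=
      (continuous_cosh.comp (continuous_const_mul B₀)).inv₀ fun t => (cosh_pos _).ne'
    simpa using (this.tendsto 0).mono_left nhdsWithin_le_nhds
  have hlim := hcosh.smul ((tendsto_integral_dilation_smul volume integrable_gaussianDensity
    integral_gaussianDensity hg hgM x).comp (tendsto_mehlerWidth hB))
  rw [one_smul, show g x = f x by simp [g, magneticPhase_self]] at hlim
  refine hlim.congr' (eventually_mem_nhdsWithin.mono fun t ht => ?_)
  simp_rw [mehlerK_eq hB ht, smul_mul_assoc, integral_smul]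
  simp [g]
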